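/- arXiv:1902.02742 — 6 statements merged into one kernel-verified Lean document; each statement's English description precedes it below -/
import Mathlib

section
/- Let n ≥ 1, let a_1,…,a_n be nonnegative integers with a_1+⋯+a_n = A, let t_1,…,t_n be nonnegative integers with t_1+⋯+t_n = T, let B be an integer, and let (p_1,…,p_n) ∈ {0,1}^n be a vector of parities. Then ∑_{f_1+⋯+f_n=B, f_i ≥ 0, f_i ≡ p_i (mod 2)} ∏_{i=1}^n C(2a_i, f_i)·(f_i)_{t_i} = ∑_{f_1+⋯+f_n = 2A−B+T, f_i ≥ 0, f_i ≡ p_i + t_i (mod 2)} ∏_{i=1}^n C(2a_i, f_i)·(f_i)_{t_i}. -/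
/-!
On `[t, m]` the summand `C(m, f) (f)_t` equals `(m)_t C(m - t, f - t)`, which is invariant under
the reflection `f ↦ m + t - f`; outside `[t, m]` it vanishes. Reflecting every coordinate is
therefore a weight-preserving involution of the box `∏ⱼ [tⱼ, 2aⱼ]`. It sends coordinate sum `B`
to `2A + T - B` and, as `2aⱼ` is even, the parity `pⱼ` to `pⱼ + tⱼ`.
-/

open Finset

/-- Descending Pochhammer symbol `(x)_t = x (x-1) ⋯ (x - t + 1)`. -/
def descPoch (x : ℤ) (t : ℕ) : ℤ := ∏ i ∈ Finset.range t, (x - i)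

/-- The sum `∑_{f_1+⋯+f_n=B, f_i ≥ 0, f_i ≡ p_i (mod 2)} ∏_i C(2a_i, f_i) (f_i)_{t_i}`. -/
def sumS (n : ℕ) (a t : Fin n → ℕ) (p : Fin n → ZMod 2) (B : ℤ) : ℤ :=
  ∑ f ∈ (Finset.Nat.antidiagonalTuple n B.toNat).filter
      (fun f => (∑ j, (f j : ℤ)) = B ∧ ∀ j, (f j : ZMod 2) = p j),
    ∏ j, (Nat.choose (2 * a j) (f j) : ℤ) * descPoch (f j) (t j)

lemma descPoch_natCast (f t : ℕ) : descPoch f t = f.descFactorial t := by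
  rw [descPoch, ← descPochhammer_eval_eq_prod_range, descPochhammer_eval_eq_descFactorial]

namespace Nat

lemma choose_mul_descFactorial {m f t : ℕ} (ht : t ≤ f) :
    m.choose f * f.descFactorial t = m.descFactorial t * (m - t).choose (f - t) := by
  rw [descFactorial_eq_factorial_mul_choose, descFactorial_eq_factorial_mul_choose,
    mul_left_comm, choose_mul ht, mul_assoc]

lemma choose_mul_descFactorial_reflect {m f t : ℕ} (ht : t ≤ f) (hf : f ≤ m) :
    m.choose (m + t - f) * (m + t - f).descFactorial t = m.choose f * f.descFactorial t := by
  rw [choose_mul_descFactorial ht, choose_mul_descFactorial (by omega : t ≤ m + t - f),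
    show m + t - f - t = (m - t) - (f - t) by omega, choose_symm (by omega)]

lemma choose_mul_descFactorial_eq_zero {m f t : ℕ} (h : f ∉ Icc t m) :
    m.choose f * f.descFactorial t = 0 := by
  rcases not_and_or.mp (mt mem_Icc.mpr h) with hlt | hgt
  · exact mul_eq_zero_of_right _ (descFactorial_eq_zero_iff_lt.mpr (by omega))
  · exact mul_eq_zero_of_left (choose_eq_zero_of_lt (by omega)) _

end Nat

section Reflection

variable {n : ℕ}

def boxIcc (t m : Fin n → ℕ) : Finset (Fin n → ℕ) := Fintype.piFinset fun j => Icc (t j) (m j)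

def boxFiber (m t : Fin n → ℕ) (p : Fin n → ZMod 2) (B : ℤ) : Finset (Fin n → ℕ) :=
  (boxIcc t m).filter fun f => (∑ j, (f j : ℤ)) = B ∧ ∀ j, (f j : ZMod 2) = p j

def boxSum (m t : Fin n → ℕ) (p : Fin n → ZMod 2) (B : ℤ) : ℤ :=
  ∑ f ∈ boxFiber m t p B, ∏ j, ((m j).choose (f j) * (f j).descFactorial (t j) : ℤ)

def reflect (m t f : Fin n → ℕ) : Fin n → ℕ := fun j => m j + t j - f j

variable {m t f : Fin n → ℕ}

lemma mem_boxIcc : f ∈ boxIcc t m ↔ ∀ j, t j ≤ f j ∧ f j ≤ m j := by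
  simp only [boxIcc, Fintype.mem_piFinset, mem_Icc]

lemma reflect_mem_boxIcc (hf : f ∈ boxIcc t m) : reflect m t f ∈ boxIcc t m := by
  rw [mem_boxIcc] at hf ⊢
  intro j
  have := hf j
  simp only [reflect]
  omega

lemma reflect_reflect (hf : f ∈ boxIcc t m) : reflect m t (reflect m t f) = f := by
  rw [mem_boxIcc] at hf
  funext j
  have := hf j
  simp only [reflect]
  omega

lemma sum_reflect (hf : f ∈ boxIcc t m) :
    ∑ j, (reflect m t f j : ℤ) = ∑ j, (m j : ℤ) + ∑ j, (t j : ℤ) - ∑ j, (f j : ℤ) := by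
  rw [mem_boxIcc] at hf
  rw [← sum_add_distrib, ← sum_sub_distrib]
  refine sum_congr rfl fun j _ => ?_
  have := hf j
  simp only [reflect]
  omega

lemma cast_reflect_zmod_two (hf : f ∈ boxIcc t m) (j : Fin n) :
    (reflect m t f j : ZMod 2) = m j + t j + f j := by
  rw [mem_boxIcc] at hf
  have := hf j
  rw [reflect, Nat.cast_sub (by omega), Nat.cast_add, ZModModule.sub_eq_add]

lemma reflect_mem_boxFiber {p : Fin n → ZMod 2} {B : ℤ} (hf : f ∈ boxFiber m t p B) :
    reflect m t f ∈ boxFiber m t (fun j => m j + t j + p j)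
      (∑ j, (m j : ℤ) + ∑ j, (t j : ℤ) - B) := by
  obtain ⟨hbox, hsum, hpar⟩ := mem_filter.mp hf
  refine mem_filter.mpr ⟨reflect_mem_boxIcc hbox, by rw [sum_reflect hbox, hsum], fun j => ?_⟩
  rw [cast_reflect_zmod_two hbox, hpar]

lemma boxSum_reflect (p : Fin n → ZMod 2) (B : ℤ) :
    boxSum m t p B
      = boxSum m t (fun j => m j + t j + p j) (∑ j, (m j : ℤ) + ∑ j, (t j : ℤ) - B) := by
  refine sum_nbij' (reflect m t) (reflect m t) (fun f hf => reflect_mem_boxFiber hf)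
    (fun g hg => ?_) (fun f hf => reflect_reflect (mem_filter.mp hf).1)
    (fun g hg => reflect_reflect (mem_filter.mp hg).1) (fun f hf => ?_)
  · simpa only [sub_sub_cancel, CharTwo.add_cancel_left] using reflect_mem_boxFiber hg
  · have hbox := mem_boxIcc.mp (mem_filter.mp hf).1
    refine prod_congr rfl fun j _ => ?_
    exact_mod_cast (Nat.choose_mul_descFactorial_reflect (hbox j).1 (hbox j).2).symm

end Reflection

lemma sumS_eq_boxSum (n : ℕ) (a t : Fin n → ℕ) (p : Fin n → ZMod 2) (B : ℤ) :
    sumS n a t p B = boxSum (fun j => 2 * a j) t p B := by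
  simp only [sumS, boxSum, boxFiber, descPoch_natCast]
  refine (sum_subset (fun f hf => ?_) fun f hf hnot => ?_).symm
  · obtain ⟨-, hsum, hpar⟩ := mem_filter.mp hf
    refine mem_filter.mpr ⟨Nat.mem_antidiagonalTuple.mpr ?_, hsum, hpar⟩
    rw [← hsum, ← Nat.cast_sum, Int.toNat_natCast]
  · obtain ⟨j, hj⟩ : ∃ j, f j ∉ Icc (t j) (2 * a j) := by
      by_contra! h
      exact hnot (mem_filter.mpr ⟨Fintype.mem_piFinset.mpr h, (mem_filter.mp hf).2⟩)
    exact prod_eq_zero (mem_univ j) (by exact_mod_cast Nat.choose_mul_descFactorial_eq_zero hj)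

theorem statement1_general (n : ℕ) (a t : Fin n → ℕ) (p : Fin n → ZMod 2) (B : ℤ) :
    sumS n a t p B
      = sumS n a t (fun j => p j + (t j : ZMod 2))
          (2 * (∑ j, (a j : ℤ)) - B + ∑ j, (t j : ℤ)) := by
  rw [sumS_eq_boxSum, sumS_eq_boxSum, boxSum_reflect]
  congr 1
  · funext j
    rw [Nat.cast_mul, Nat.cast_ofNat, CharTwo.two_eq_zero (R := ZMod 2), zero_mul, zero_add,
      add_comm]
  · push_cast
    rw [← mul_sum]
    ring

theorem statement1 (n : ℕ) (hn : 1 ≤ n) (a t : Fin n → ℕ) (p : Fin n → ZMod 2) (B : ℤ) :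
    sumS n a t p B
      = sumS n a t (fun j => p j + (t j : ZMod 2))
          (2 * (∑ j, (a j : ℤ)) - B + ∑ j, (t j : ℤ)) :=
  statement1_general n a t p B
end

section
/- Let g ≥ 2 and n ≥ 1 be integers and let a_1,…,a_n be nonnegative integers with a_1+⋯+a_n = 2g−3+n. Then ∑_{(o_1,…,o_n)} ∏_{j=1}^n C(2a_j, o_j) taken over n-tuples of positive odd integers with o_1+⋯+o_n = 2g−4+n equals ∑_{(o_1,…,o_n)} ∏_{j=1}^n C(2a_j, o_j) taken over n-tuples of positive odd integers with o_1+⋯+o_n = 2g−2+n. -/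
/-! The reflection `o_j ↦ 2a_j - o_j` preserves oddness and, on tuples with `o_j ≤ 2a_j`
(the only ones with a nonzero product), turns total `M` into `2∑a_j - M` while
`C(2a_j, o_j) = C(2a_j, 2a_j - o_j)`. Since `(2g-4+n) + (2g-2+n) = 2(2g-3+n)`, the two sums
are exchanged by it. -/

open Finset

/-- `∑_{(o_1,…,o_n) positive odd, o_1+⋯+o_n = M} ∏_j C(2a_j, o_j)`. -/
def oddSum (n M : ℕ) (a : Fin n → ℕ) : ℤ :=
  ∑ o ∈ (Finset.Nat.antidiagonalTuple n M).filter (fun o => ∀ j, Odd (o j)),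
    ∏ j, (Nat.choose (2 * a j) (o j) : ℤ)

def oddTuplesBelow (n M : ℕ) (a : Fin n → ℕ) : Finset (Fin n → ℕ) :=
  (Finset.Nat.antidiagonalTuple n M).filter (fun o => ∀ j, Odd (o j) ∧ o j ≤ 2 * a j)

theorem mem_oddTuplesBelow {n M : ℕ} {a o : Fin n → ℕ} :
    o ∈ oddTuplesBelow n M a ↔ ∑ j, o j = M ∧ ∀ j, Odd (o j) ∧ o j ≤ 2 * a j := by
  simp only [oddTuplesBelow, mem_filter, Finset.Nat.mem_antidiagonalTuple]

theorem oddSum_eq_sum_oddTuplesBelow (n M : ℕ) (a : Fin n → ℕ) :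
    oddSum n M a = ∑ o ∈ oddTuplesBelow n M a, ∏ j, (Nat.choose (2 * a j) (o j) : ℤ) := by
  refine (sum_subset (fun o ho => ?_) fun o ho hno => ?_).symm
  · simp only [oddTuplesBelow, mem_filter] at ho ⊢
    exact ⟨ho.1, fun j => (ho.2 j).1⟩
  · simp only [oddTuplesBelow, mem_filter, not_and, not_forall] at ho hno
    obtain ⟨j, hj⟩ := hno ho.1 |>.imp fun j h => not_le.mp (h (ho.2 j))
    exact prod_eq_zero (mem_univ j) (mod_cast Nat.choose_eq_zero_of_lt hj)

theorem reflect_mem_oddTuplesBelow {n M N : ℕ} {a o : Fin n → ℕ}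
    (hMN : M + N = 2 * ∑ j, a j) (ho : o ∈ oddTuplesBelow n M a) :
    (fun j => 2 * a j - o j) ∈ oddTuplesBelow n N a := by
  rw [mem_oddTuplesBelow] at ho ⊢
  obtain ⟨hsum, hodd⟩ := ho
  refine ⟨?_, fun j => ⟨Nat.Even.sub_odd (hodd j).2 (even_two_mul _) (hodd j).1, Nat.sub_le _ _⟩⟩
  rw [sum_tsub_distrib _ fun j _ => (hodd j).2, ← mul_sum, hsum]
  omega

theorem oddSum_eq_of_add_eq {n M N : ℕ} {a : Fin n → ℕ} (hMN : M + N = 2 * ∑ j, a j) :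
    oddSum n M a = oddSum n N a := by
  rw [oddSum_eq_sum_oddTuplesBelow, oddSum_eq_sum_oddTuplesBelow]
  have hNM : N + M = 2 * ∑ j, a j := by omega
  refine sum_nbij' (fun o j => 2 * a j - o j) (fun o j => 2 * a j - o j)
    (fun o ho => reflect_mem_oddTuplesBelow hMN ho) (fun o ho => reflect_mem_oddTuplesBelow hNM ho)
    (fun o ho => ?_) (fun o ho => ?_) (fun o ho => ?_)
  all_goals
    have hle := fun j => ((mem_oddTuplesBelow.mp ho).2 j).2
  · exact funext fun j => Nat.sub_sub_self (hle j)
  · exact funext fun j => Nat.sub_sub_self (hle j)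
  · exact prod_congr rfl fun j _ => mod_cast (Nat.choose_symm (hle j)).symm

theorem statement3_general (g n : ℕ) (hg : 2 ≤ g) (a : Fin n → ℕ)
    (ha : ∑ j, a j = 2 * g - 3 + n) :
    oddSum n (2 * g - 4 + n) a = oddSum n (2 * g - 2 + n) a :=
  oddSum_eq_of_add_eq (by omega)

theorem statement3 (g n : ℕ) (hg : 2 ≤ g) (hn : 1 ≤ n) (a : Fin n → ℕ)
    (ha : ∑ j, a j = 2 * g - 3 + n) :
    oddSum n (2 * g - 4 + n) a = oddSum n (2 * g - 2 + n) a :=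
  statement3_general g n hg a ha
end

section
/- Let g ≥ 2 and n ≥ 2 be integers and let a_1,…,a_{n−1} be arbitrary nonnegative integers (no condition on their sum). Then P_{g,n}(a_1,…,a_{n−1}, 0) = 0. -/
open Finset

/-- Ordered `k`-tuples of pairwise disjoint nonempty subsets of `{1,…,n}` with union `{1,…,n}`. -/
def Parts (n k : ℕ) : Finset (Fin k → Finset (Fin n)) :=
  Finset.univ.filter fun I =>
    (∀ j, I j ≠ ∅) ∧ (∀ j j', j ≠ j' → Disjoint (I j) (I j')) ∧
      Finset.univ.biUnion I = Finset.univ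

/-- The double factorial ratio `(2d-1)!! / (2d+1-2c)!! = ∏_{i=1}^{c-1} (2d+1-2i)`. -/
def dfRatio (d c : ℕ) : ℤ := ∏ i ∈ Finset.range (c - 1), (2 * (d : ℤ) + 1 - 2 * (i + 1))

/-- The polynomial `P_{g,n}(a_1,…,a_n)` of the paper. -/
def Pgn (g n : ℕ) (a : Fin n → ℕ) : ℚ :=
  ∑ k ∈ Finset.Icc 1 n,
    ((-1) ^ k * (Nat.factorial (2 * g - 3 + k) : ℚ) / (Nat.factorial k : ℚ)) *
      ∑ I ∈ Parts n k,
        ∑ d ∈ Finset.Nat.antidiagonalTuple k (g - 2 + n),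
          ∏ j, ((Nat.choose (2 * (∑ ℓ ∈ I j, a ℓ) + 1) (2 * d j) : ℚ) *
            (dfRatio (d j) (I j).card : ℚ))

/-!
Let `S_k` be the weighted sum over ordered `k`-block partitions of `{1,…,n}` with weights `a`,
and `S'_k` the one over `{1,…,n+1}` with weights `(a, 0)`, both with `D = g - 2 + (n + 1)`.
Split the partitions of `{1,…,n+1}` according to the last point. If it is a singleton block,
that block contributes `C(1, 2d) = [d = 0]`, and deleting it recovers every `(k-1)`-block
partition of `{1,…,n}` exactly `k` times. Otherwise it was added to a block `I_j` of a `k`-block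
partition of `{1,…,n}`, which multiplies the weight by `2d_j + 1 - 2|I_j|`; summed over `j` this
is `2D + k - 2n = 2g - 2 + k`. So `S'_k = k S_{k-1} + (2g - 2 + k) S_k`, and against the
coefficients `(-1)^k (2g-3+k)!/k!` the sum telescopes to `u_{n+1} - u_0` with
`u_m = (-1)^m (2g-2+m)!/m! S_m`. Both ends vanish: `S_{n+1} = 0` since there are more blocks than
points, and `S_0 = 0` since `D > 0`.
-/

namespace Pgn

variable {n k : ℕ}

theorem mem_Parts {I : Fin k → Finset (Fin n)} :
    I ∈ Parts n k ↔ (∀ j, I j ≠ ∅) ∧ (∀ j j', j ≠ j' → Disjoint (I j) (I j')) ∧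
      univ.biUnion I = univ := by
  simp [Parts]

theorem sum_card_of_mem_Parts {I : Fin k → Finset (Fin n)} (hI : I ∈ Parts n k) :
    ∑ j, (I j).card = n := by
  obtain ⟨-, hdisj, hcover⟩ := mem_Parts.1 hI
  rw [← card_biUnion fun j _ j' _ h => hdisj j j' h, hcover, card_univ, Fintype.card_fin]

theorem Parts_eq_empty_of_lt (h : n < k) : Parts n k = ∅ := by
  refine eq_empty_of_forall_notMem fun I hI => h.not_ge ?_
  calc k = ∑ _j : Fin k, 1 := by simp
    _ ≤ ∑ j, (I j).card :=
      sum_le_sum fun j _ => card_pos.2 (nonempty_iff_ne_empty.2 ((mem_Parts.1 hI).1 j))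
    _ = n := sum_card_of_mem_Parts hI

theorem last_notMem_map_castSuccEmb (c : Finset (Fin n)) :
    Fin.last n ∉ c.map Fin.castSuccEmb := by
  simp [Fin.castSucc_ne_last]

theorem exists_castSucc_mem_of_ne_singleton_last {S : Finset (Fin (n + 1))} (hS : S.Nonempty)
    (h : S ≠ {Fin.last n}) : ∃ y : Fin n, y.castSucc ∈ S := by
  obtain ⟨x, hx, hne⟩ : ∃ x ∈ S, x ≠ Fin.last n := by
    by_contra! hall
    exact h (hS.subset_singleton_iff.1 fun x hx => mem_singleton.2 (hall x hx))
  induction x using Fin.lastCases with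
  | last => exact absurd rfl hne
  | cast y => exact ⟨y, hx⟩

noncomputable def castSuccPreimage (S : Finset (Fin (n + 1))) : Finset (Fin n) :=
  S.preimage Fin.castSucc (Fin.castSucc_injective n).injOn

@[simp]
theorem mem_castSuccPreimage {S : Finset (Fin (n + 1))} {y : Fin n} :
    y ∈ castSuccPreimage S ↔ y.castSucc ∈ S :=
  mem_preimage

theorem map_castSuccPreimage (S : Finset (Fin (n + 1))) :
    (castSuccPreimage S).map Fin.castSuccEmb = S.erase (Fin.last n) := by
  ext x
  induction x using Fin.lastCases <;> simp [Fin.castSucc_ne_last]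

theorem castSuccPreimage_map (c : Finset (Fin n)) :
    castSuccPreimage (c.map Fin.castSuccEmb) = c := by
  ext; simp

theorem castSuccPreimage_mem_Parts {I : Fin k → Finset (Fin (n + 1))}
    (hne : ∀ j, ∃ y : Fin n, y.castSucc ∈ I j)
    (hdisj : ∀ j j', j ≠ j' → Disjoint (I j) (I j'))
    (hcover : ∀ y : Fin n, ∃ j, y.castSucc ∈ I j) :
    (fun j => castSuccPreimage (I j)) ∈ Parts n k := by
  refine mem_Parts.2 ⟨fun j => ?_, fun j j' h => ?_, ?_⟩
  · obtain ⟨y, hy⟩ := hne j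
    exact ne_empty_of_mem (mem_castSuccPreimage.2 hy)
  · exact disjoint_left.2 fun y hy hy' =>
      disjoint_left.1 (hdisj j j' h) (mem_castSuccPreimage.1 hy) (mem_castSuccPreimage.1 hy')
  · refine eq_univ_of_forall fun y => ?_
    obtain ⟨j, hj⟩ := hcover y
    exact mem_biUnion.2 ⟨j, mem_univ _, mem_castSuccPreimage.2 hj⟩

def blockWeight (a : Fin n → ℕ) (c : Finset (Fin n)) (m : ℕ) : ℚ :=
  (Nat.choose (2 * ∑ ℓ ∈ c, a ℓ + 1) (2 * m) : ℚ) * (dfRatio m c.card : ℚ)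

theorem dfRatio_succ (m : ℕ) {c : ℕ} (hc : c ≠ 0) :
    dfRatio m (c + 1) = dfRatio m c * (2 * m + 1 - 2 * c) := by
  obtain ⟨c, rfl⟩ := Nat.exists_eq_succ_of_ne_zero hc
  simp only [dfRatio, Nat.succ_sub_one, prod_range_succ]
  push_cast
  ring

theorem blockWeight_snoc_zero_map (a : Fin n → ℕ) (c : Finset (Fin n)) (m : ℕ) :
    blockWeight (Fin.snoc a 0) (c.map Fin.castSuccEmb) m = blockWeight a c m := by
  simp [blockWeight]

theorem blockWeight_snoc_zero_singleton_last (a : Fin n → ℕ) (m : ℕ) :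
    blockWeight (Fin.snoc a 0) {Fin.last n} m = Nat.choose 1 (2 * m) := by
  simp [blockWeight, dfRatio]

theorem blockWeight_snoc_zero_insert_last (a : Fin n → ℕ) {c : Finset (Fin n)} (hc : c.Nonempty)
    (m : ℕ) :
    blockWeight (Fin.snoc a 0) (insert (Fin.last n) (c.map Fin.castSuccEmb)) m
      = (2 * m + 1 - 2 * c.card) * blockWeight a c m := by
  rw [blockWeight, sum_insert (last_notMem_map_castSuccEmb c),
    card_insert_of_notMem (last_notMem_map_castSuccEmb c), card_map,
    dfRatio_succ m hc.card_pos.ne', ← blockWeight_snoc_zero_map a c m, blockWeight]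
  simp only [Fin.snoc_last, zero_add, card_map]
  push_cast
  ring

theorem sum_antidiagonalTuple_choose_one_mul {R : Type*} [CommSemiring R] (D : ℕ)
    (j : Fin (k + 1)) (F : (Fin k → ℕ) → R) :
    ∑ d ∈ Nat.antidiagonalTuple (k + 1) D,
        (Nat.choose 1 (2 * d j) : R) * F (fun i => d (j.succAbove i))
      = ∑ e ∈ Nat.antidiagonalTuple k D, F e := by
  have hvanish : ∀ d ∈ Nat.antidiagonalTuple (k + 1) D,
      (Nat.choose 1 (2 * d j) : R) * F (fun i => d (j.succAbove i)) ≠ 0 → d j = 0 := by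
    intro d _ hd
    by_contra h
    rw [Nat.choose_eq_zero_of_lt (by omega), Nat.cast_zero, zero_mul] at hd
    exact hd rfl
  rw [← sum_filter_of_ne hvanish]
  refine sum_nbij' (fun d i => d (j.succAbove i)) (fun e => j.insertNth 0 e) ?_ ?_ ?_ ?_ ?_
  · intro d hd
    rw [mem_filter, Nat.mem_antidiagonalTuple, Fin.sum_univ_succAbove _ j] at hd
    rw [Nat.mem_antidiagonalTuple]
    omega
  · intro e he
    rw [Nat.mem_antidiagonalTuple] at he
    rw [mem_filter, Nat.mem_antidiagonalTuple, Fin.sum_univ_succAbove _ j]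
    simp [he]
  · intro d hd
    rw [mem_filter] at hd
    ext i
    induction i using j.succAboveCases <;> simp [hd.2]
  · intro e _
    ext i
    simp
  · intro d hd
    rw [mem_filter] at hd
    simp [hd.2]

def insertSingletonLast (j : Fin (k + 1)) (J : Fin k → Finset (Fin n)) :
    Fin (k + 1) → Finset (Fin (n + 1)) :=
  j.insertNth {Fin.last n} fun i => (J i).map Fin.castSuccEmb

section insertSingletonLast

variable {j : Fin (k + 1)} {J : Fin k → Finset (Fin n)}

@[simp]
theorem insertSingletonLast_self : insertSingletonLast j J j = {Fin.last n} :=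
  Fin.insertNth_apply_same _ _ _

@[simp]
theorem insertSingletonLast_succAbove (i : Fin k) :
    insertSingletonLast j J (j.succAbove i) = (J i).map Fin.castSuccEmb :=
  Fin.insertNth_apply_succAbove _ _ _ _

theorem insertSingletonLast_mem_Parts (hJ : J ∈ Parts n k) :
    insertSingletonLast j J ∈ Parts (n + 1) (k + 1) := by
  obtain ⟨hne, hdisj, hcover⟩ := mem_Parts.1 hJ
  have hdisj_self (i : Fin k) :
      Disjoint (insertSingletonLast j J j) (insertSingletonLast j J (j.succAbove i)) := by simp
  refine mem_Parts.2 ⟨fun x => ?_, fun x x' hx => ?_, eq_univ_of_forall fun y => ?_⟩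
  · induction x using j.succAboveCases <;> simp [hne]
  · induction x using j.succAboveCases with
    | x => obtain ⟨i', rfl⟩ := Fin.exists_succAbove_eq hx.symm; exact hdisj_self i'
    | p i =>
      induction x' using j.succAboveCases with
      | x => exact (hdisj_self i).symm
      | p i' =>
        simpa using hdisj i i' fun h => hx (h ▸ rfl)
  · rw [mem_biUnion]
    induction y using Fin.lastCases with
    | last => exact ⟨j, mem_univ _, by simp⟩
    | cast y =>
      obtain ⟨i, -, hi⟩ := mem_biUnion.1 (hcover ▸ mem_univ y : y ∈ univ.biUnion J)
      exact ⟨j.succAbove i, mem_univ _, by simpa using hi⟩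

theorem insertSingletonLast_injective :
    Function.Injective fun p : Fin (k + 1) × (Fin k → Finset (Fin n)) =>
      insertSingletonLast p.1 p.2 := by
  rintro ⟨j, J⟩ ⟨j', J'⟩ h
  simp only at h
  obtain rfl : j = j' := by
    by_contra hj
    obtain ⟨i, hi⟩ := Fin.exists_succAbove_eq hj
    have := congrFun h j
    rw [insertSingletonLast_self, ← hi, insertSingletonLast_succAbove] at this
    exact last_notMem_map_castSuccEmb (J' i) (this ▸ mem_singleton_self _)
  refine Prod.ext rfl (funext fun i => map_injective Fin.castSuccEmb ?_)
  simpa using congrFun h (j.succAbove i)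

theorem exists_insertSingletonLast_eq {I : Fin (k + 1) → Finset (Fin (n + 1))}
    (hI : I ∈ Parts (n + 1) (k + 1)) (hj : I j = {Fin.last n}) :
    ∃ J ∈ Parts n k, insertSingletonLast j J = I := by
  obtain ⟨hne, hdisj, hcover⟩ := mem_Parts.1 hI
  have hlast (i : Fin k) : Fin.last n ∉ I (j.succAbove i) := fun h =>
    disjoint_left.1 (hdisj _ _ (Fin.succAbove_ne j i).symm) (hj ▸ mem_singleton_self _) h
  refine ⟨fun i => castSuccPreimage (I (j.succAbove i)),
    castSuccPreimage_mem_Parts ?_ ?_ ?_, ?_⟩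
  · exact fun i => exists_castSucc_mem_of_ne_singleton_last (nonempty_iff_ne_empty.2 (hne _))
      fun h => hlast i (h ▸ mem_singleton_self _)
  · exact fun i i' h => hdisj _ _ (Fin.succAbove_right_injective.ne h)
  · intro y
    obtain ⟨x, -, hx⟩ := mem_biUnion.1 (hcover ▸ mem_univ y.castSucc :
      y.castSucc ∈ univ.biUnion I)
    induction x using j.succAboveCases with
    | x => exact absurd (mem_singleton.1 (hj ▸ hx)) (Fin.castSucc_ne_last y)
    | p i => exact ⟨i, hx⟩
  · ext1 x
    induction x using j.succAboveCases with
    | x => simp [hj]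
    | p i => simp [map_castSuccPreimage, erase_eq_of_notMem (hlast i)]

end insertSingletonLast

def insertLastInto (j : Fin k) (J : Fin k → Finset (Fin n)) : Fin k → Finset (Fin (n + 1)) :=
  Function.update (fun i => (J i).map Fin.castSuccEmb) j
    (insert (Fin.last n) ((J j).map Fin.castSuccEmb))

section insertLastInto

variable {j : Fin k} {J : Fin k → Finset (Fin n)}

@[simp]
theorem insertLastInto_self :
    insertLastInto j J j = insert (Fin.last n) ((J j).map Fin.castSuccEmb) :=
  Function.update_self _ _ _

theorem insertLastInto_of_ne {i : Fin k} (h : i ≠ j) :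
    insertLastInto j J i = (J i).map Fin.castSuccEmb :=
  Function.update_of_ne h _ _

@[simp]
theorem castSuccPreimage_insertLastInto (i : Fin k) :
    castSuccPreimage (insertLastInto j J i) = J i := by
  rcases eq_or_ne i j with rfl | h
  · ext; simp [Fin.castSucc_ne_last]
  · rw [insertLastInto_of_ne h, castSuccPreimage_map]

theorem insertLastInto_mem_Parts (hJ : J ∈ Parts n k) :
    insertLastInto j J ∈ Parts (n + 1) k := by
  obtain ⟨hne, hdisj, hcover⟩ := mem_Parts.1 hJ
  have hdisj' {i i' : Fin k} (h : i ≠ i') (hi : i ≠ j) :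
      Disjoint (insertLastInto j J i) (insertLastInto j J i') := by
    rcases eq_or_ne i' j with rfl | hi'
    · simpa [insertLastInto_of_ne hi, last_notMem_map_castSuccEmb] using hdisj i i' h
    · simpa [insertLastInto_of_ne hi, insertLastInto_of_ne hi'] using hdisj i i' h
  refine mem_Parts.2 ⟨fun i => ?_, fun i i' h => ?_, eq_univ_of_forall fun y => ?_⟩
  · rcases eq_or_ne i j with rfl | hi
    · simp
    · simpa [insertLastInto_of_ne hi] using hne i
  · rcases eq_or_ne i j with rfl | hi
    · exact (hdisj' h.symm h.symm).symm
    · exact hdisj' h hi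
  · rw [mem_biUnion]
    induction y using Fin.lastCases with
    | last => exact ⟨j, mem_univ _, by simp⟩
    | cast y =>
      obtain ⟨i, -, hi⟩ := mem_biUnion.1 (hcover ▸ mem_univ y : y ∈ univ.biUnion J)
      refine ⟨i, mem_univ _, ?_⟩
      rcases eq_or_ne i j with rfl | hij
      · simp [hi]
      · simpa [insertLastInto_of_ne hij] using hi

theorem insertLastInto_ne_singleton_last (hJ : (J j).Nonempty) (i : Fin k) :
    insertLastInto j J i ≠ {Fin.last n} := by
  intro h
  rcases eq_or_ne i j with rfl | hi
  · obtain ⟨y, hy⟩ := hJ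
    have : y.castSucc ∈ insertLastInto i J i := by simp [hy]
    exact Fin.castSucc_ne_last y (mem_singleton.1 (h ▸ this))
  · exact last_notMem_map_castSuccEmb (J i)
      (insertLastInto_of_ne (J := J) hi ▸ h ▸ mem_singleton_self _)

theorem insertLastInto_injective :
    Function.Injective fun p : Fin k × (Fin k → Finset (Fin n)) => insertLastInto p.1 p.2 := by
  rintro ⟨j, J⟩ ⟨j', J'⟩ h
  simp only at h
  obtain rfl : j = j' := by
    by_contra hj
    have := congrFun h j
    rw [insertLastInto_self, insertLastInto_of_ne hj] at this
    exact last_notMem_map_castSuccEmb (J' j) (this ▸ mem_insert_self _ _)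
  refine Prod.ext rfl (funext fun i => ?_)
  simpa using congrArg castSuccPreimage (congrFun h i)

theorem exists_insertLastInto_eq {I : Fin k → Finset (Fin (n + 1))} (hI : I ∈ Parts (n + 1) k)
    (hsingle : ∀ i, I i ≠ {Fin.last n}) :
    ∃ j, ∃ J ∈ Parts n k, insertLastInto j J = I := by
  obtain ⟨hne, hdisj, hcover⟩ := mem_Parts.1 hI
  obtain ⟨j, -, hj⟩ := mem_biUnion.1 (hcover ▸ mem_univ _ : Fin.last n ∈ univ.biUnion I)
  refine ⟨j, fun i => castSuccPreimage (I i), castSuccPreimage_mem_Parts ?_ hdisj ?_, ?_⟩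
  · exact fun i => exists_castSucc_mem_of_ne_singleton_last
      (nonempty_iff_ne_empty.2 (hne i)) (hsingle i)
  · intro y
    obtain ⟨i, -, hi⟩ := mem_biUnion.1 (hcover ▸ mem_univ _ : y.castSucc ∈ univ.biUnion I)
    exact ⟨i, hi⟩
  · ext1 i
    rcases eq_or_ne i j with rfl | hij
    · rw [insertLastInto_self, map_castSuccPreimage, insert_erase hj]
    · rw [insertLastInto_of_ne hij, map_castSuccPreimage,
        erase_eq_of_notMem fun h => disjoint_left.1 (hdisj i j hij) h hj]

end insertLastInto

def tupleWeight (a : Fin n → ℕ) (D : ℕ) (I : Fin k → Finset (Fin n)) : ℚ :=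
  ∑ d ∈ Nat.antidiagonalTuple k D, ∏ j, blockWeight a (I j) (d j)

def partitionSum (a : Fin n → ℕ) (D k : ℕ) : ℚ :=
  ∑ I ∈ Parts n k, tupleWeight a D I

theorem eq_sum_partitionSum (g : ℕ) (a : Fin n → ℕ) :
    Pgn g n a = ∑ k ∈ Icc 1 n,
      (-1) ^ k * ((2 * g - 3 + k).factorial : ℚ) / k.factorial * partitionSum a (g - 2 + n) k :=
  rfl

theorem tupleWeight_insertSingletonLast (a : Fin n → ℕ) (D : ℕ) (j : Fin (k + 1))
    (J : Fin k → Finset (Fin n)) :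
    tupleWeight (Fin.snoc a 0) D (insertSingletonLast j J) = tupleWeight a D J := by
  rw [tupleWeight, tupleWeight, ← sum_antidiagonalTuple_choose_one_mul D j]
  refine sum_congr rfl fun d _ => ?_
  simp [Fin.prod_univ_succAbove _ j, blockWeight_snoc_zero_singleton_last,
    blockWeight_snoc_zero_map]

theorem sum_tupleWeight_insertLastInto (a : Fin n → ℕ) (D : ℕ) {J : Fin k → Finset (Fin n)}
    (hJ : J ∈ Parts n k) :
    ∑ j, tupleWeight (Fin.snoc a 0) D (insertLastInto j J)
      = (2 * D + k - 2 * n) * tupleWeight a D J := by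
  have hweight (j : Fin k) (d : Fin k → ℕ) :
      ∏ i, blockWeight (Fin.snoc a 0) (insertLastInto j J i) (d i)
        = (2 * d j + 1 - 2 * (J j).card) * ∏ i, blockWeight a (J i) (d i) := by
    have hJj : (J j).Nonempty := nonempty_iff_ne_empty.2 ((mem_Parts.1 hJ).1 j)
    rw [← mul_prod_erase univ _ (mem_univ j), ← mul_prod_erase univ _ (mem_univ j),
      insertLastInto_self, blockWeight_snoc_zero_insert_last a hJj, mul_assoc]
    congr 2
    refine prod_congr rfl fun i hi => ?_
    rw [insertLastInto_of_ne (ne_of_mem_erase hi), blockWeight_snoc_zero_map]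
  simp only [tupleWeight, hweight]
  rw [sum_comm, mul_sum]
  refine sum_congr rfl fun d hd => ?_
  have hcard : ((∑ j, (J j).card : ℕ) : ℚ) = n := by exact_mod_cast sum_card_of_mem_Parts hJ
  rw [← sum_mul, ← Nat.mem_antidiagonalTuple.1 hd, ← hcard]
  push_cast
  rw [sum_sub_distrib, sum_add_distrib, ← mul_sum, ← mul_sum]
  simp

theorem sum_tupleWeight_filter_singleton_last (a : Fin n → ℕ) (D k : ℕ) :
    ∑ I ∈ (Parts (n + 1) (k + 1)).filter (fun I => ∃ j, I j = {Fin.last n}),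
        tupleWeight (Fin.snoc a 0) D I
      = (k + 1) * partitionSum a D k := by
  have hprod : (k + 1 : ℚ) * partitionSum a D k
      = ∑ p ∈ (univ : Finset (Fin (k + 1))) ×ˢ Parts n k, tupleWeight a D p.2 := by
    simp [sum_product, partitionSum]
  rw [hprod, eq_comm]
  refine sum_bij (fun p _ => insertSingletonLast p.1 p.2) (fun p hp => ?_)
    (fun p _ q _ h => insertSingletonLast_injective h) (fun I hI => ?_)
    (fun p _ => (tupleWeight_insertSingletonLast a D p.1 p.2).symm)
  · exact mem_filter.2 ⟨insertSingletonLast_mem_Parts (mem_product.1 hp).2, p.1,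
      insertSingletonLast_self⟩
  · obtain ⟨hI, j, hj⟩ := mem_filter.1 hI
    obtain ⟨J, hJ, rfl⟩ := exists_insertSingletonLast_eq hI hj
    exact ⟨(j, J), mem_product.2 ⟨mem_univ _, hJ⟩, rfl⟩

theorem sum_tupleWeight_filter_not_singleton_last (a : Fin n → ℕ) (D k : ℕ) :
    ∑ I ∈ (Parts (n + 1) k).filter (fun I => ¬∃ j, I j = {Fin.last n}),
        tupleWeight (Fin.snoc a 0) D I
      = (2 * D + k - 2 * n) * partitionSum a D k := by
  have hprod : (2 * D + k - 2 * n : ℚ) * partitionSum a D k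
      = ∑ p ∈ (univ : Finset (Fin k)) ×ˢ Parts n k,
          tupleWeight (Fin.snoc a 0) D (insertLastInto p.1 p.2) := by
    rw [sum_product_right, partitionSum, mul_sum]
    exact sum_congr rfl fun J hJ => (sum_tupleWeight_insertLastInto a D hJ).symm
  rw [hprod, eq_comm]
  refine sum_bij (fun p _ => insertLastInto p.1 p.2) (fun p hp => ?_)
    (fun p _ q _ h => insertLastInto_injective h) (fun I hI => ?_) (fun _ _ => rfl)
  · have hJ := (mem_product.1 hp).2
    refine mem_filter.2 ⟨insertLastInto_mem_Parts hJ, not_exists.2 ?_⟩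
    exact insertLastInto_ne_singleton_last (nonempty_iff_ne_empty.2 ((mem_Parts.1 hJ).1 p.1))
  · obtain ⟨hI, hsingle⟩ := mem_filter.1 hI
    obtain ⟨j, J, hJ, rfl⟩ := exists_insertLastInto_eq hI (not_exists.1 hsingle)
    exact ⟨(j, J), mem_product.2 ⟨mem_univ _, hJ⟩, rfl⟩

theorem partitionSum_snoc_zero_succ (a : Fin n → ℕ) (D k : ℕ) :
    partitionSum (Fin.snoc a 0) D (k + 1)
      = (k + 1) * partitionSum a D k
        + (2 * D + (k + 1 : ℕ) - 2 * n) * partitionSum a D (k + 1) := by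
  rw [partitionSum, ← sum_filter_add_sum_filter_not _ (fun I => ∃ j, I j = {Fin.last n}),
    sum_tupleWeight_filter_singleton_last, sum_tupleWeight_filter_not_singleton_last]

theorem eq_sum_range (g : ℕ) (a : Fin n → ℕ) :
    Pgn g n a = ∑ k ∈ range n, (-1) ^ (k + 1) * ((2 * g - 3 + (k + 1)).factorial : ℚ)
      / (k + 1).factorial * partitionSum a (g - 2 + n) (k + 1) := by
  rw [eq_sum_partitionSum, range_eq_Ico]
  exact (sum_Ico_add' (fun k => (-1) ^ k * ((2 * g - 3 + k).factorial : ℚ) / k.factorial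
    * partitionSum a (g - 2 + n) k) 0 n 1).symm

def telescopeTerm (g : ℕ) (a : Fin n → ℕ) (m : ℕ) : ℚ :=
  (-1) ^ m * ((2 * g - 2 + m).factorial : ℚ) / m.factorial * partitionSum a (g - 1 + n) m

theorem coeff_mul_partitionSum_snoc_zero {g : ℕ} (hg : 2 ≤ g) (a : Fin n → ℕ) (k : ℕ) :
    (-1) ^ (k + 1) * ((2 * g - 3 + (k + 1)).factorial : ℚ) / (k + 1).factorial
        * partitionSum (Fin.snoc a 0) (g - 2 + (n + 1)) (k + 1)
      = telescopeTerm g a (k + 1) - telescopeTerm g a k := by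
  obtain ⟨N, rfl⟩ : ∃ N, g = N + 2 := ⟨g - 2, by omega⟩
  rw [show N + 2 - 2 + (n + 1) = N + 2 - 1 + n by omega, partitionSum_snoc_zero_succ,
    telescopeTerm, telescopeTerm, show 2 * (N + 2) - 3 + (k + 1) = 2 * N + 2 + k by omega,
    show 2 * (N + 2) - 2 + (k + 1) = 2 * N + 2 + k + 1 by omega,
    show 2 * (N + 2) - 2 + k = 2 * N + 2 + k by omega, Nat.factorial_succ (2 * N + 2 + k),
    Nat.factorial_succ k, show N + 2 - 1 + n = N + n + 1 by omega]
  have : (k.factorial : ℚ) ≠ 0 := by positivity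
  push_cast
  field_simp
  ring

theorem telescopeTerm_zero {g : ℕ} (hg : 2 ≤ g) (a : Fin n → ℕ) :
    telescopeTerm g a 0 = 0 := by
  obtain ⟨D, hD⟩ : ∃ D, g - 1 + n = D + 1 := ⟨g - 2 + n, by omega⟩
  simp [telescopeTerm, partitionSum, tupleWeight, hD]

theorem telescopeTerm_succ_self (g : ℕ) (a : Fin n → ℕ) : telescopeTerm g a (n + 1) = 0 := by
  simp [telescopeTerm, partitionSum, Parts_eq_empty_of_lt n.lt_succ_self]

end Pgn

theorem statement4_general (g n : ℕ) (hg : 2 ≤ g) (a : Fin n → ℕ) :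
    Pgn g (n + 1) (Fin.snoc a 0) = 0 := by
  rw [Pgn.eq_sum_range, sum_congr rfl fun k _ => Pgn.coeff_mul_partitionSum_snoc_zero hg a k,
    sum_range_sub, Pgn.telescopeTerm_zero hg, Pgn.telescopeTerm_succ_self, sub_zero]

/-- `P_{g,n+1}(a_1,…,a_n,0) = 0` for arbitrary nonnegative `a_1,…,a_n` (here `n + 1 ≥ 2`). -/
theorem statement4 (g n : ℕ) (hg : 2 ≤ g) (hn : 1 ≤ n) (a : Fin n → ℕ) :
    Pgn g (n + 1) (Fin.snoc a 0) = 0 :=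
  statement4_general g n hg a
end

section
/- Let g ≥ 2 and n ≥ 1 be integers and let a_1,…,a_n be arbitrary nonnegative integers (no condition on their sum). Then P_{g,n+1}(a_1,…,a_n, 1) − P_{g,n+1}(a_1,…,a_n, 0) = P_{g,n}(a_1,…,a_n) · (4·(a_1+⋯+a_n) − 8g + 10 − 2n). -/
open Finset

/-!
Write `P_{g,n} = ∑_k c_k S_k(N)` with `N = g - 2 + n`, where `S_k(N)` sums over ordered partitions
into `k` blocks and over `d` with `∑ d_j = N`. An ordered partition of `{1,…,n+1}` into `m+1`
blocks comes from a partition of `{1,…,n}` either by adding the new block `{n+1}` or by putting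
`n+1` into one of its `m+1` blocks. In the first case only the factor `C(2a_{n+1}+1, 2d)` of the new
block depends on `a_{n+1}`, and `C(3, 2d) - C(1, 2d)` is `3` at `d = 1` and `0` otherwise. In the
second case Pascal's rule gives `(2e+1) (C(2A+3, 2e+2) - C(2A+1, 2e+2)) = (4A+3-2e) C(2A+1, 2e)`,
where `2e+1` is exactly the factor the double factorial ratio gains when the block grows by one
element and its `d` by one; summed over the blocks, `4A+3-2e` becomes `4|a| + 3(m+1) - 2N`.
So the `(m+1)`-block terms differ by `3(m+1) S_m(N) + (4|a| + 3(m+1) - 2N) S_{m+1}(N)`, and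
regrouping by `S_k` with `(m+1) c_{m+1} = -(2g-2+m) c_m` leaves `(4|a| - 8g + 10 - 2n) c_k S_k`.
-/

lemma sum_Icc_one_eq_sum_range {M : Type*} [AddCommMonoid M] (n : ℕ) (u : ℕ → M) :
    ∑ k ∈ Icc 1 n, u k = ∑ k ∈ range n, u (k + 1) := by
  rw [← Ico_add_one_right_eq_Icc, sum_Ico_eq_sum_range]
  simp [add_comm]

theorem sum_antidiagonalTuple_succ {M : Type*} [AddCommMonoid M] {m : ℕ} (j : Fin (m + 1))
    (N : ℕ) (f : (Fin (m + 1) → ℕ) → M) :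
    ∑ d ∈ Nat.antidiagonalTuple (m + 1) N, f d
      = ∑ p ∈ antidiagonal N, ∑ e ∈ Nat.antidiagonalTuple m p.2, f (j.insertNth p.1 e) := by
  rw [sum_sigma']
  refine sum_bij' (fun d _ => ⟨(d j, N - d j), j.removeNth d⟩)
    (fun x _ => j.insertNth x.1.1 x.2) ?_ ?_ ?_ ?_ ?_
  · intro d hd
    rw [Nat.mem_antidiagonalTuple, Fin.sum_univ_succAbove _ j] at hd
    simp only [mem_sigma, HasAntidiagonal.mem_antidiagonal, Nat.mem_antidiagonalTuple]
    exact ⟨by omega, by simp only [Fin.removeNth]; omega⟩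
  · rintro ⟨⟨r, s⟩, e⟩ h
    simp only [mem_sigma, HasAntidiagonal.mem_antidiagonal, Nat.mem_antidiagonalTuple] at h
    rw [Nat.mem_antidiagonalTuple, Fin.sum_univ_succAbove _ j]
    simp [h]
  · intro d _; simp
  · rintro ⟨⟨r, s⟩, e⟩ h
    simp only [mem_sigma, HasAntidiagonal.mem_antidiagonal, Nat.mem_antidiagonalTuple] at h
    simp only [Fin.insertNth_apply_same, Fin.removeNth_insertNth, Sigma.mk.injEq, Prod.mk.injEq,
      true_and, heq_eq_eq, and_true]
    omega
  · intro d _; simp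

theorem sum_antidiagonalTuple_mul_prod {R : Type*} [CommSemiring R] {m : ℕ} (j : Fin (m + 1))
    (N : ℕ) (F : ℕ → R) (w : Fin (m + 1) → ℕ → R) :
    ∑ d ∈ Nat.antidiagonalTuple (m + 1) N, F (d j) * ∏ i, w i (d i)
      = ∑ p ∈ antidiagonal N, F p.1 * w j p.1 *
          ∑ e ∈ Nat.antidiagonalTuple m p.2, ∏ i, w (j.succAbove i) (e i) := by
  rw [sum_antidiagonalTuple_succ j]
  refine sum_congr rfl fun p _ => ?_
  rw [mul_sum]
  refine sum_congr rfl fun e _ => ?_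
  rw [Fin.prod_univ_succAbove _ j]
  simp [mul_assoc]

theorem succ_mul_choose_add_two_sub_choose (M k : ℕ) :
    ((k : ℚ) + 1) * ((M + 2).choose (k + 2) - M.choose (k + 2) : ℚ)
      = (2 * M + 1 - k) * M.choose k := by
  have hstep : (M.choose (k + 1) : ℚ) * (k + 1) = M.choose k * (M - k) := by
    rcases le_or_gt k M with h | h
    · have := congrArg (Nat.cast (R := ℚ)) (Nat.choose_succ_right_eq M k)
      push_cast [Nat.cast_sub h] at this
      exact this
    · simp [Nat.choose_eq_zero_of_lt h, Nat.choose_eq_zero_of_lt (Nat.lt_succ_of_lt h)]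
  have hpascal : ((M + 2).choose (k + 2) : ℚ)
      = M.choose k + 2 * M.choose (k + 1) + M.choose (k + 2) := by
    simp only [Nat.choose_succ_succ, Nat.cast_add]
    ring
  rw [hpascal]
  linear_combination 2 * hstep

lemma dfRatio_one (d : ℕ) : dfRatio d 1 = 1 := by simp [dfRatio]

lemma dfRatio_succ_succ (e : ℕ) {c : ℕ} (hc : c ≠ 0) :
    dfRatio (e + 1) (c + 1) = (2 * e + 1) * dfRatio e c := by
  obtain ⟨c, rfl⟩ := Nat.exists_eq_succ_of_ne_zero hc
  rw [dfRatio, dfRatio, Nat.add_sub_cancel, prod_range_succ', mul_comm]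
  push_cast
  ring_nf

lemma choose_sub_choose_mul_dfRatio (A e : ℕ) {c : ℕ} (hc : c ≠ 0) :
    (((2 * A + 1 + 2).choose (2 * e + 2) : ℚ) - (2 * A + 1).choose (2 * e + 2))
        * dfRatio (e + 1) (c + 1)
      = (4 * A + 3 - 2 * e) * ((2 * A + 1).choose (2 * e) * dfRatio e c) := by
  have := succ_mul_choose_add_two_sub_choose (2 * A + 1) (2 * e)
  rw [dfRatio_succ_succ e hc]
  push_cast at this ⊢
  linear_combination (dfRatio e c : ℚ) * this

section Parts

variable {n : ℕ}

lemma mem_Parts {k : ℕ} {I : Fin k → Finset (Fin n)} :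
    I ∈ Parts n k ↔ (∀ j, (I j).Nonempty) ∧ (∀ x j j', x ∈ I j → x ∈ I j' → j = j') ∧
      ∀ x, ∃ j, x ∈ I j := by
  simp only [Parts, mem_filter, mem_univ, true_and, ← nonempty_iff_ne_empty,
    eq_univ_iff_forall, mem_biUnion]
  refine and_congr_right' (and_congr_left' ⟨fun h x j j' hj hj' => ?_, fun h j j' hne => ?_⟩)
  · by_contra hne
    exact disjoint_left.mp (h j j' hne) hj hj'
  · exact disjoint_left.mpr fun _ hj hj' => hne (h _ j j' hj hj')

lemma Parts_eq_empty_of_lt {k : ℕ} (h : n < k) : Parts n k = ∅ := by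
  refine eq_empty_of_forall_notMem fun I hI => ?_
  obtain ⟨hne, huniq, -⟩ := mem_Parts.mp hI
  choose x hx using hne
  have := Fintype.card_le_of_injective x fun j j' e => huniq _ _ _ (hx j) (e ▸ hx j')
  simp only [Fintype.card_fin] at this
  omega

lemma Parts_zero_eq_empty (hn : 1 ≤ n) : Parts n 0 = ∅ :=
  eq_empty_of_forall_notMem fun _ hI => (((mem_Parts.mp hI).2.2 ⟨0, hn⟩).choose).elim0

lemma sum_sum_eq_sum_of_mem_Parts {R : Type*} [AddCommMonoid R] {k : ℕ}
    {J : Fin k → Finset (Fin n)} (hJ : J ∈ Parts n k) (f : Fin n → R) :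
    ∑ j, ∑ ℓ ∈ J j, f ℓ = ∑ ℓ, f ℓ := by
  obtain ⟨-, huniq, hcover⟩ := mem_Parts.mp hJ
  rw [← sum_biUnion fun j _ j' _ hne => disjoint_left.mpr fun _ hx hx' => hne (huniq _ _ _ hx hx')]
  congr
  exact eq_univ_of_forall fun x => mem_biUnion.mpr (by simpa using hcover x)

end Parts

section InsertLast

variable {n : ℕ}

lemma exists_map_castSuccEmb_eq_erase_last (t : Finset (Fin (n + 1))) :
    ∃ s : Finset (Fin n), s.map Fin.castSuccEmb = t.erase (Fin.last n) := by
  have hsub : t.erase (Fin.last n) ⊆ univ.map Fin.castSuccEmb := fun x hx => by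
    obtain ⟨i, rfl⟩ := Fin.exists_castSucc_eq.mpr (ne_of_mem_erase hx)
    exact mem_map_of_mem Fin.castSuccEmb (mem_univ i)
  obtain ⟨s, -, hs⟩ := subset_map_iff.mp hsub
  exact ⟨s, hs.symm⟩

lemma castSucc_mem_iff_of_map_eq_erase_last {s : Finset (Fin n)} {t : Finset (Fin (n + 1))}
    (h : s.map Fin.castSuccEmb = t.erase (Fin.last n)) {i : Fin n} : i.castSucc ∈ t ↔ i ∈ s := by
  simpa [Fin.castSucc_ne_last] using congrArg (i.castSucc ∈ ·) h.symm

def insertSingletonBlock {m : ℕ} (j : Fin (m + 1)) (J : Fin m → Finset (Fin n)) :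
    Fin (m + 1) → Finset (Fin (n + 1)) :=
  j.insertNth {Fin.last n} fun i => (J i).map Fin.castSuccEmb

def insertIntoBlock {k : ℕ} (j : Fin k) (J : Fin k → Finset (Fin n)) :
    Fin k → Finset (Fin (n + 1)) :=
  Function.update (fun i => (J i).map Fin.castSuccEmb) j
    (insert (Fin.last n) ((J j).map Fin.castSuccEmb))

section insertSingletonBlock

variable {m : ℕ} (j : Fin (m + 1)) (J : Fin m → Finset (Fin n))

@[simp] lemma insertSingletonBlock_self : insertSingletonBlock j J j = {Fin.last n} :=
  Fin.insertNth_apply_same _ _ _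

@[simp] lemma insertSingletonBlock_succAbove (i : Fin m) :
    insertSingletonBlock j J (j.succAbove i) = (J i).map Fin.castSuccEmb :=
  Fin.insertNth_apply_succAbove _ _ _ _

lemma last_mem_insertSingletonBlock_iff {l : Fin (m + 1)} :
    Fin.last n ∈ insertSingletonBlock j J l ↔ l = j := by
  induction l using Fin.succAboveCases j with
  | x => simp
  | p i => simp [Fin.succAbove_ne]

lemma insertSingletonBlock_mem_Parts (hJ : J ∈ Parts n m) :
    insertSingletonBlock j J ∈ Parts (n + 1) (m + 1) := by
  obtain ⟨hne, huniq, hcover⟩ := mem_Parts.mp hJ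
  refine mem_Parts.mpr ⟨fun l => ?_, fun x l l' hl hl' => ?_, fun x => ?_⟩
  · induction l using Fin.succAboveCases j <;> simp [hne]
  · induction l using Fin.succAboveCases j <;> induction l' using Fin.succAboveCases j <;>
      simp only [insertSingletonBlock_self, insertSingletonBlock_succAbove, mem_singleton, mem_map,
        Fin.coe_castSuccEmb] at hl hl'
    · rfl
    · simp [hl] at hl'
    · simp [hl'] at hl
    · obtain ⟨i, hi, rfl⟩ := hl
      simp only [Fin.castSucc_inj, exists_eq_right] at hl'
      rw [huniq i _ _ hi hl']
  · induction x using Fin.lastCases with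
    | last => exact ⟨j, by simp⟩
    | cast i =>
      obtain ⟨l, hl⟩ := hcover i
      exact ⟨j.succAbove l, by simpa⟩

end insertSingletonBlock

section insertIntoBlock

variable {k : ℕ} (j : Fin k) (J : Fin k → Finset (Fin n))

@[simp] lemma insertIntoBlock_self :
    insertIntoBlock j J j = insert (Fin.last n) ((J j).map Fin.castSuccEmb) :=
  Function.update_self _ _ _

lemma insertIntoBlock_of_ne {l : Fin k} (h : l ≠ j) :
    insertIntoBlock j J l = (J l).map Fin.castSuccEmb :=
  Function.update_of_ne h _ _

lemma insertIntoBlock_erase_last (l : Fin k) :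
    (insertIntoBlock j J l).erase (Fin.last n) = (J l).map Fin.castSuccEmb := by
  rcases eq_or_ne l j with rfl | h
  · simp
  · simp [insertIntoBlock_of_ne j J h]

lemma last_mem_insertIntoBlock_iff {l : Fin k} :
    Fin.last n ∈ insertIntoBlock j J l ↔ l = j := by
  rcases eq_or_ne l j with rfl | h
  · simp
  · simp [insertIntoBlock_of_ne j J h, h]

lemma castSucc_mem_insertIntoBlock_iff {l : Fin k} {i : Fin n} :
    i.castSucc ∈ insertIntoBlock j J l ↔ i ∈ J l :=
  castSucc_mem_iff_of_map_eq_erase_last (insertIntoBlock_erase_last j J l).symm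

lemma insertIntoBlock_mem_Parts (hJ : J ∈ Parts n k) :
    insertIntoBlock j J ∈ Parts (n + 1) k := by
  obtain ⟨hne, huniq, hcover⟩ := mem_Parts.mp hJ
  refine mem_Parts.mpr ⟨fun l => ?_, fun x l l' hl hl' => ?_, fun x => ?_⟩
  · rcases eq_or_ne l j with rfl | h
    · simp
    · simp [insertIntoBlock_of_ne j J h, hne]
  · induction x using Fin.lastCases with
    | last =>
      rw [(last_mem_insertIntoBlock_iff j J).mp hl, (last_mem_insertIntoBlock_iff j J).mp hl']
    | cast i =>
      rw [castSucc_mem_insertIntoBlock_iff] at hl hl'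
      exact huniq i l l' hl hl'
  · induction x using Fin.lastCases with
    | last => exact ⟨j, by simp⟩
    | cast i =>
      obtain ⟨l, hl⟩ := hcover i
      exact ⟨l, (castSucc_mem_insertIntoBlock_iff j J).mpr hl⟩

end insertIntoBlock

end InsertLast

section SumParts

variable {n : ℕ} {M : Type*} [AddCommMonoid M]

lemma sum_Parts_filter_singleton_last {m : ℕ} (f : (Fin (m + 1) → Finset (Fin (n + 1))) → M) :
    ∑ I ∈ (Parts (n + 1) (m + 1)).filter (fun I => ∃ j, I j = {Fin.last n}), f I
      = ∑ j, ∑ J ∈ Parts n m, f (insertSingletonBlock j J) := by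
  rw [← sum_product']
  refine (sum_nbij (fun p : Fin (m + 1) × (Fin m → Finset (Fin n)) => insertSingletonBlock p.1 p.2)
    ?_ ?_ ?_ fun _ _ => rfl).symm
  · rintro ⟨j, J⟩ hJ
    simp only [mem_product, mem_univ, true_and] at hJ
    exact mem_filter.mpr ⟨insertSingletonBlock_mem_Parts j J hJ, j, by simp⟩
  · rintro ⟨j₁, J₁⟩ - ⟨j₂, J₂⟩ - (h : insertSingletonBlock j₁ J₁ = insertSingletonBlock j₂ J₂)
    obtain rfl : j₁ = j₂ := (last_mem_insertSingletonBlock_iff j₂ J₂).mp (h ▸ by simp)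
    obtain rfl : J₁ = J₂ := funext fun i =>
      map_injective Fin.castSuccEmb (by simpa using congrFun h (j₁.succAbove i))
    rfl
  · intro I hI
    obtain ⟨hP, j, hj⟩ := mem_filter.mp hI
    obtain ⟨hne, huniq, hcover⟩ := mem_Parts.mp hP
    have hlast (i : Fin m) : Fin.last n ∉ I (j.succAbove i) := fun h =>
      Fin.succAbove_ne j i (huniq _ _ _ h (by simp [hj]))
    choose J hJ using fun i => exists_map_castSuccEmb_eq_erase_last (I (j.succAbove i))
    simp only [erase_eq_of_notMem (hlast _)] at hJ
    refine ⟨(j, J), mem_product.mpr ⟨mem_univ _, mem_Parts.mpr ⟨fun i => ?_, ?_, fun x => ?_⟩⟩, ?_⟩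
    · simpa [← hJ] using hne (j.succAbove i)
    · intro x i i' hx hx'
      exact Fin.succAbove_right_injective
        (huniq x.castSucc (j.succAbove i) _ (by simpa [← hJ] using hx) (by simpa [← hJ] using hx'))
    · obtain ⟨l, hl⟩ := hcover x.castSucc
      have : l ≠ j := by rintro rfl; simp [hj, Fin.castSucc_ne_last] at hl
      obtain ⟨i, rfl⟩ := Fin.exists_succAbove_eq this
      exact ⟨i, by simpa [← hJ] using hl⟩
    · funext l
      induction l using Fin.succAboveCases j with
      | x => simp [hj]
      | p i => simp [hJ]

lemma sum_Parts_filter_not_singleton_last {k : ℕ} (f : (Fin k → Finset (Fin (n + 1))) → M) :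
    ∑ I ∈ (Parts (n + 1) k).filter (fun I => ¬∃ j, I j = {Fin.last n}), f I
      = ∑ j, ∑ J ∈ Parts n k, f (insertIntoBlock j J) := by
  rw [← sum_product']
  refine (sum_nbij (fun p : Fin k × (Fin k → Finset (Fin n)) => insertIntoBlock p.1 p.2)
    ?_ ?_ ?_ fun _ _ => rfl).symm
  · rintro ⟨j, J⟩ hJ
    simp only [mem_product, mem_univ, true_and] at hJ
    refine mem_filter.mpr ⟨insertIntoBlock_mem_Parts j J hJ, fun ⟨l, hl⟩ => ?_⟩
    have := insertIntoBlock_erase_last j J l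
    rw [hl, erase_singleton, eq_comm, map_eq_empty] at this
    exact (mem_Parts.mp hJ).1 l |>.ne_empty this
  · rintro ⟨j₁, J₁⟩ - ⟨j₂, J₂⟩ - (h : insertIntoBlock j₁ J₁ = insertIntoBlock j₂ J₂)
    obtain rfl : j₁ = j₂ := (last_mem_insertIntoBlock_iff j₂ J₂).mp (h ▸ by simp)
    obtain rfl : J₁ = J₂ := funext fun i => map_injective Fin.castSuccEmb (by
      rw [← insertIntoBlock_erase_last j₁, ← insertIntoBlock_erase_last j₁, h])
    rfl
  · intro I hI
    obtain ⟨hP, hsingle⟩ := mem_filter.mp hI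
    obtain ⟨hne, huniq, hcover⟩ := mem_Parts.mp hP
    obtain ⟨j, hj⟩ := hcover (Fin.last n)
    choose J hJ using fun l => exists_map_castSuccEmb_eq_erase_last (I l)
    have hmem (x : Fin n) (l : Fin k) := castSucc_mem_iff_of_map_eq_erase_last (hJ l) (i := x)
    refine ⟨(j, J), mem_product.mpr ⟨mem_univ _, mem_Parts.mpr ⟨fun l => ?_, ?_, fun x => ?_⟩⟩, ?_⟩
    · rw [← map_nonempty (f := Fin.castSuccEmb), hJ, nonempty_iff_ne_empty, Ne,
        erase_eq_empty_iff, not_or]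
      exact ⟨(hne l).ne_empty, fun h => hsingle ⟨l, h⟩⟩
    · exact fun x l l' hx hx' => huniq x.castSucc l l' ((hmem x l).mpr hx) ((hmem x l').mpr hx')
    · obtain ⟨l, hl⟩ := hcover x.castSucc
      exact ⟨l, (hmem x l).mp hl⟩
    · funext l
      show insertIntoBlock j J l = I l
      rcases eq_or_ne l j with rfl | h
      · simp [hJ, insert_erase hj]
      · rw [insertIntoBlock_of_ne _ _ h, hJ, erase_eq_of_notMem fun h' => h (huniq _ _ _ h' hj)]

theorem sum_Parts_succ {m : ℕ} (f : (Fin (m + 1) → Finset (Fin (n + 1))) → M) :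
    ∑ I ∈ Parts (n + 1) (m + 1), f I
      = ∑ j, ∑ J ∈ Parts n m, f (insertSingletonBlock j J)
        + ∑ j, ∑ J ∈ Parts n (m + 1), f (insertIntoBlock j J) := by
  rw [← sum_filter_add_sum_filter_not _ fun I => ∃ j, I j = {Fin.last n},
    sum_Parts_filter_singleton_last, sum_Parts_filter_not_singleton_last]

end SumParts

section BlockSums

variable {n : ℕ}

def blockWeight (a : Fin n → ℕ) (d : ℕ) (s : Finset (Fin n)) : ℚ :=
  (Nat.choose (2 * (∑ ℓ ∈ s, a ℓ) + 1) (2 * d) : ℚ) * (dfRatio d s.card : ℚ)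

def tupleSum {k : ℕ} (a : Fin n → ℕ) (J : Fin k → Finset (Fin n)) (N : ℕ) : ℚ :=
  ∑ d ∈ Nat.antidiagonalTuple k N, ∏ i, blockWeight a (d i) (J i)

def partSum (a : Fin n → ℕ) (k N : ℕ) : ℚ :=
  ∑ J ∈ Parts n k, tupleSum a J N

def pgnCoeff (g k : ℕ) : ℚ :=
  (-1) ^ k * (Nat.factorial (2 * g - 3 + k) : ℚ) / (Nat.factorial k : ℚ)

lemma Pgn_eq_sum_partSum (g : ℕ) (a : Fin n → ℕ) :
    Pgn g n a = ∑ k ∈ Icc 1 n, pgnCoeff g k * partSum a k (g - 2 + n) := rfl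

variable (a : Fin n → ℕ) (x e : ℕ)

@[simp] lemma blockWeight_snoc_map_castSuccEmb (s : Finset (Fin n)) :
    blockWeight (Fin.snoc a x) e (s.map Fin.castSuccEmb) = blockWeight a e s := by
  simp [blockWeight]

@[simp] lemma blockWeight_snoc_singleton_last :
    blockWeight (Fin.snoc a x) e {Fin.last n} = (2 * x + 1).choose (2 * e) := by
  simp [blockWeight, dfRatio_one]

@[simp] lemma blockWeight_snoc_insert_last (s : Finset (Fin n)) :
    blockWeight (Fin.snoc a x) e (insert (Fin.last n) (s.map Fin.castSuccEmb))
      = (2 * (x + ∑ ℓ ∈ s, a ℓ) + 1).choose (2 * e) * (dfRatio e (s.card + 1) : ℚ) := by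
  simp [blockWeight]

variable {m : ℕ} (j : Fin (m + 1))

lemma tupleSum_snoc_insertSingletonBlock (J : Fin m → Finset (Fin n)) (N : ℕ) :
    tupleSum (Fin.snoc a x) (insertSingletonBlock j J) N
      = ∑ p ∈ antidiagonal N, (2 * x + 1).choose (2 * p.1) * tupleSum a J p.2 := by
  simpa [tupleSum] using sum_antidiagonalTuple_mul_prod j N (fun _ => (1 : ℚ))
    fun i r => blockWeight (Fin.snoc a x) r (insertSingletonBlock j J i)

lemma tupleSum_snoc_insertIntoBlock (J : Fin (m + 1) → Finset (Fin n)) (N : ℕ) :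
    tupleSum (Fin.snoc a x) (insertIntoBlock j J) N
      = ∑ p ∈ antidiagonal N,
          (2 * (x + ∑ ℓ ∈ J j, a ℓ) + 1).choose (2 * p.1) * (dfRatio p.1 ((J j).card + 1) : ℚ)
            * tupleSum a (fun i => J (j.succAbove i)) p.2 := by
  simpa [tupleSum, insertIntoBlock_of_ne j J (Fin.succAbove_ne j _)] using
    sum_antidiagonalTuple_mul_prod j N (fun _ => (1 : ℚ))
      fun i r => blockWeight (Fin.snoc a x) r (insertIntoBlock j J i)

end BlockSums

section Difference

variable {n : ℕ} (a : Fin n → ℕ) {m : ℕ} (j : Fin (m + 1)) (N : ℕ)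

lemma tupleSum_snoc_one_sub_snoc_zero_insertSingletonBlock (J : Fin m → Finset (Fin n)) :
    tupleSum (Fin.snoc a 1) (insertSingletonBlock j J) (N + 1)
        - tupleSum (Fin.snoc a 0) (insertSingletonBlock j J) (N + 1)
      = 3 * tupleSum a J N := by
  rw [tupleSum_snoc_insertSingletonBlock, tupleSum_snoc_insertSingletonBlock, ← sum_sub_distrib,
    sum_eq_single_of_mem (1, N) (by simp [add_comm])]
  · norm_num
  · rintro ⟨_ | _ | r, s⟩ hp hne
    · simp
    · simp only [HasAntidiagonal.mem_antidiagonal, ne_eq, Prod.mk.injEq, true_and] at hp hne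
      omega
    · simp [Nat.choose_eq_zero_of_lt (show 3 < 2 * (r + 2) by omega),
        Nat.choose_eq_zero_of_lt (show 1 < 2 * (r + 2) by omega)]

lemma tupleSum_snoc_one_sub_snoc_zero_insertIntoBlock (J : Fin (m + 1) → Finset (Fin n))
    (hJ : (J j).Nonempty) :
    tupleSum (Fin.snoc a 1) (insertIntoBlock j J) (N + 1)
        - tupleSum (Fin.snoc a 0) (insertIntoBlock j J) (N + 1)
      = ∑ d ∈ Nat.antidiagonalTuple (m + 1) N,
          (4 * ∑ ℓ ∈ J j, (a ℓ : ℚ) + 3 - 2 * d j) * ∏ i, blockWeight a (d i) (J i) := by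
  have hrhs := sum_antidiagonalTuple_mul_prod j N (fun r => 4 * ∑ ℓ ∈ J j, (a ℓ : ℚ) + 3 - 2 * r)
    fun i r => blockWeight a r (J i)
  rw [tupleSum_snoc_insertIntoBlock, tupleSum_snoc_insertIntoBlock, ← sum_sub_distrib,
    Nat.sum_antidiagonal_succ, hrhs]
  simp only [Nat.mul_zero, Nat.choose_zero_right, sub_self, zero_add]
  refine sum_congr rfl fun p _ => ?_
  have := choose_sub_choose_mul_dfRatio (∑ ℓ ∈ J j, a ℓ) p.1 (card_ne_zero.mpr hJ)
  rw [show 2 * (1 + ∑ ℓ ∈ J j, a ℓ) + 1 = 2 * ∑ ℓ ∈ J j, a ℓ + 1 + 2 by ring,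
    show 2 * (p.1 + 1) = 2 * p.1 + 2 by ring]
  change _ = _ * _ * tupleSum a (fun i => J (j.succAbove i)) p.2
  rw [blockWeight]
  push_cast at this ⊢
  linear_combination this * tupleSum a (fun i => J (j.succAbove i)) p.2

lemma sum_linear_mul_prod_blockWeight {m : ℕ} {J : Fin (m + 1) → Finset (Fin n)}
    (hJ : J ∈ Parts n (m + 1)) (N : ℕ) :
    ∑ j, ∑ d ∈ Nat.antidiagonalTuple (m + 1) N,
        (4 * ∑ ℓ ∈ J j, (a ℓ : ℚ) + 3 - 2 * d j) * ∏ i, blockWeight a (d i) (J i)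
      = (4 * ∑ ℓ, (a ℓ : ℚ) + 3 * (m + 1) - 2 * N) * tupleSum a J N := by
  rw [sum_comm, tupleSum, mul_sum]
  refine sum_congr rfl fun d hd => ?_
  have hdsum : ∑ j, (d j : ℚ) = N := by exact_mod_cast Nat.mem_antidiagonalTuple.mp hd
  rw [← sum_mul, sum_sub_distrib, sum_add_distrib, ← mul_sum, ← mul_sum, hdsum,
    sum_sum_eq_sum_of_mem_Parts hJ]
  simp only [sum_const, card_univ, Fintype.card_fin, nsmul_eq_mul, Nat.cast_add, Nat.cast_one]
  ring

theorem partSum_snoc_one_sub_partSum_snoc_zero (m N : ℕ) :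
    partSum (Fin.snoc a 1) (m + 1) (N + 1) - partSum (Fin.snoc a 0) (m + 1) (N + 1)
      = 3 * (m + 1) * partSum a m N
        + (4 * ∑ ℓ, (a ℓ : ℚ) + 3 * (m + 1) - 2 * N) * partSum a (m + 1) N := by
  simp only [partSum, sum_Parts_succ]
  rw [add_sub_add_comm, ← sum_sub_distrib, ← sum_sub_distrib]
  congr 1
  · simp only [← sum_sub_distrib, tupleSum_snoc_one_sub_snoc_zero_insertSingletonBlock, ← mul_sum,
      sum_const, card_univ, Fintype.card_fin, nsmul_eq_mul]
    push_cast
    ring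
  · simp only [← sum_sub_distrib]
    rw [sum_comm, mul_sum]
    refine sum_congr rfl fun J hJ => ?_
    rw [← sum_linear_mul_prod_blockWeight a hJ]
    exact sum_congr rfl fun j _ =>
      tupleSum_snoc_one_sub_snoc_zero_insertIntoBlock a j N J ((mem_Parts.mp hJ).1 j)

end Difference

lemma pgnCoeff_succ_mul {g : ℕ} (hg : 2 ≤ g) (m : ℕ) :
    pgnCoeff g (m + 1) * (m + 1) = -(2 * g - 2 + m) * pgnCoeff g m := by
  have h : ((2 * g - 3 + m : ℕ) : ℚ) = 2 * g - 3 + m := by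
    push_cast [Nat.cast_sub (show 3 ≤ 2 * g by omega)]
    ring
  rw [pgnCoeff, pgnCoeff, ← add_assoc, Nat.factorial_succ, Nat.factorial_succ]
  push_cast [h]
  field_simp
  ring

lemma partSum_zero {n : ℕ} (hn : 1 ≤ n) (a : Fin n → ℕ) (N : ℕ) : partSum a 0 N = 0 := by
  rw [partSum, Parts_zero_eq_empty hn, sum_empty]

lemma partSum_of_lt {n k : ℕ} (h : n < k) (a : Fin n → ℕ) (N : ℕ) : partSum a k N = 0 := by
  rw [partSum, Parts_eq_empty_of_lt h, sum_empty]

theorem statement5 (g n : ℕ) (hg : 2 ≤ g) (hn : 1 ≤ n) (a : Fin n → ℕ) :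
    Pgn g (n + 1) (Fin.snoc a 1) - Pgn g (n + 1) (Fin.snoc a 0)
      = Pgn g n a * (4 * (∑ j, (a j : ℚ)) - 8 * (g : ℚ) + 10 - 2 * (n : ℚ)) := by
  set N := g - 2 + n with hN
  have hNq : (N : ℚ) = g - 2 + n := by push_cast [hN, Nat.cast_sub hg]; ring
  set L := 4 * ∑ j, (a j : ℚ)
  set f := fun k => pgnCoeff g k * partSum a k N
  calc Pgn g (n + 1) (Fin.snoc a 1) - Pgn g (n + 1) (Fin.snoc a 0)
      = ∑ m ∈ range (n + 1), pgnCoeff g (m + 1) * (3 * (m + 1) * partSum a m N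
          + (L + 3 * (m + 1) - 2 * N) * partSum a (m + 1) N) := by
        simp only [Pgn_eq_sum_partSum, sum_Icc_one_eq_sum_range, ← sum_sub_distrib, ← mul_sub]
        exact sum_congr rfl fun m _ => congrArg _ (partSum_snoc_one_sub_partSum_snoc_zero a m N)
    _ = ∑ m ∈ range (n + 1), -3 * (2 * g - 2 + m) * f m
          + ∑ m ∈ range (n + 1), (L + 3 * (m + 1) - 2 * N) * f (m + 1) := by
        rw [← sum_add_distrib]
        refine sum_congr rfl fun m _ => ?_
        linear_combination 3 * partSum a m N * pgnCoeff_succ_mul hg m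
    _ = ∑ m ∈ range n, (-3 * (2 * g - 2 + (m + 1)) + (L + 3 * (m + 1) - 2 * N)) * f (m + 1) := by
        rw [sum_range_succ', sum_range_succ _ n]
        simp only [f, partSum_zero hn, partSum_of_lt (Nat.lt_succ_self n), mul_zero, add_zero,
          Nat.cast_add, Nat.cast_one, ← sum_add_distrib, add_mul]
    _ = Pgn g n a * (L - 8 * g + 10 - 2 * n) := by
        rw [Pgn_eq_sum_partSum, sum_Icc_one_eq_sum_range, sum_mul]
        refine sum_congr rfl fun m _ => ?_
        rw [hNq]
        ring
end

section
/- Let g ≥ 2 and n ≥ 1 be integers and let a_1,…,a_n be arbitrary nonnegative integers. Then P_{g,n}(a_1,…,a_n) = ∑_{t=0}^{n} P_{n,t}(a_1,…,a_n). -/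
open Finset

/-- Binomial coefficient with integer lower index: `0` if the lower index is negative. -/
def zbinom (m : ℕ) (r : ℤ) : ℤ :=
  if 0 ≤ r then (m.choose r.toNat : ℤ) else 0

/-- The polynomial `P_{n,t}(a_1,…,a_n)` of the paper (with `g` implicit in the notation there). -/
def Pnt (g n t : ℕ) (a : Fin n → ℕ) : ℚ :=
  ∑ k ∈ Finset.Icc 1 n,
    ((-1) ^ k * (Nat.factorial (2 * g - 3 + k) : ℚ) / (Nat.factorial k : ℚ)) *
      ∑ I ∈ Parts n k,
        ∑ d ∈ Finset.Nat.antidiagonalTuple k (g - 2 + n),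
          ∑ A ∈ Finset.powersetCard (n - t) (Finset.univ : Finset (Fin k)),
            ∏ j, ((zbinom (2 * (∑ ℓ ∈ I j, a ℓ)) (2 * (d j : ℤ) - if j ∈ A then 1 else 0) : ℚ) *
              (dfRatio (d j) (I j).card : ℚ))

/-
Pascal's rule `C(2s+1, 2d) = C(2s, 2d) + C(2s, 2d-1)` splits every factor of the product defining
`P_{g,n}` into two terms. Expanding the product over the blocks `j` gives a sum over the sets `A`
of blocks that take the second term, and sorting these sets by their size `n - t` yields the sum
of the `P_{n,t}`.
-/

lemma zbinom_natCast (m r : ℕ) : zbinom m r = m.choose r := by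
  simp [zbinom]

lemma choose_succ_eq_zbinom_add_zbinom_sub_one (m r : ℕ) :
    ((m + 1).choose r : ℤ) = zbinom m r + zbinom m (r - 1) := by
  cases r with
  | zero => simp [zbinom]
  | succ r =>
    rw [Nat.choose_succ_succ', Nat.cast_add, add_comm, Nat.cast_succ, add_sub_cancel_right,
      zbinom_natCast, ← Nat.cast_succ, zbinom_natCast]

lemma prod_add_eq_sum_powerset_prod_ite {ι M R : Type*} [CommSemiring R] [DecidableEq ι]
    (s : Finset ι) (f : ι → M → R) (x y : M) :
    ∏ j ∈ s, (f j x + f j y) = ∑ A ∈ s.powerset, ∏ j ∈ s, f j (if j ∈ A then y else x) := by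
  simp_rw [add_comm (f _ x), prod_add]
  refine sum_congr rfl fun A hA => ?_
  rw [← prod_sdiff (mem_powerset.mp hA), mul_comm]
  congr 1 <;> refine prod_congr rfl fun j hj => ?_
  · rw [if_neg (mem_sdiff.mp hj).2]
  · rw [if_pos hj]

lemma sum_range_sum_powersetCard_sub {α M : Type*} [AddCommMonoid M] {s : Finset α} {n : ℕ}
    (hs : #s ≤ n) (F : Finset α → M) :
    ∑ t ∈ range (n + 1), ∑ A ∈ powersetCard (n - t) s, F A = ∑ A ∈ s.powerset, F A := by
  have reflect := sum_range_reflect (fun m => ∑ A ∈ powersetCard m s, F A) (n + 1)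
  rw [Nat.add_sub_cancel] at reflect
  rw [reflect, sum_powerset]
  refine (sum_subset (range_subset_range.mpr (by omega)) fun m _ hm => ?_).symm
  rw [powersetCard_eq_empty.mpr (by simpa using hm), sum_empty]

theorem statement7_general (g n : ℕ) (a : Fin n → ℕ) :
    Pgn g n a = ∑ t ∈ Finset.range (n + 1), Pnt g n t a := by
  unfold Pgn Pnt
  conv_rhs => rw [sum_comm]
  refine sum_congr rfl fun k hk => ?_
  have card_blocks : #(univ : Finset (Fin k)) ≤ n := by simpa using (mem_Icc.mp hk).2
  rw [← Finset.mul_sum]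
  congr 1
  conv_rhs => rw [sum_comm]
  refine sum_congr rfl fun I _ => ?_
  conv_rhs => rw [sum_comm]
  refine sum_congr rfl fun d _ => ?_
  rw [sum_range_sum_powersetCard_sub card_blocks, ← prod_add_eq_sum_powerset_prod_ite univ
    (fun j e => (zbinom (2 * ∑ ℓ ∈ I j, a ℓ) (2 * d j - e) : ℚ) * dfRatio (d j) #(I j)) 0 1]
  refine prod_congr rfl fun j _ => ?_
  have pascal := choose_succ_eq_zbinom_add_zbinom_sub_one (2 * ∑ ℓ ∈ I j, a ℓ) (2 * d j)
  push_cast at pascal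
  rw [sub_zero, ← add_mul, ← Int.cast_add, ← pascal, Int.cast_natCast]

theorem statement7 (g n : ℕ) (hg : 2 ≤ g) (hn : 1 ≤ n) (a : Fin n → ℕ) :
    Pgn g n a = ∑ t ∈ Finset.range (n + 1), Pnt g n t a :=
  statement7_general g n a
end

section
/- Let n ≥ 1 be an integer, let S be any integer, and let x be any rational number. Then ∑_{t=0}^{n} (−x)^t · [ (C(n−1,t) − C(n−1,t−1))·(S+t) + 2(t−1)·C(n−1,t−1) ] = (1−x)^{n−1} · ( (S+2−n)·(x+1) + (n−2) ), where C(n−1,−1) := 0. -/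
open Finset

/-!
Writing `m = n - 1` and `y = -x`, the summand splits into a `C(m, t)` part and a `C(m, t - 1)`
part; shifting the index of the second one, the sum becomes
`∑ₛ C(m, s) yˢ (a + (1 + y) s)` with `a = S (1 - y) - y`. The binomial theorem and its
derivative `(1 + y) ∑ₛ s C(m, s) yˢ = m y (1 + y)ᵐ` evaluate this to `(1 + y)ᵐ (a + m y)`.
-/

section BinomialSums

variable {R : Type*} [CommRing R]

theorem sum_range_choose_mul_pow (m : ℕ) (y : R) :
    ∑ s ∈ range (m + 1), (m.choose s : R) * y ^ s = (1 + y) ^ m := by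
  rw [add_comm 1 y, add_pow]
  exact sum_congr rfl fun s _ => by rw [one_pow, mul_one, mul_comm]

theorem sum_range_succ_mul_choose_mul_pow (m : ℕ) (y : R) :
    ∑ s ∈ range (m + 2), (s : R) * ((m + 1).choose s : R) * y ^ s
      = (m + 1) * y * (1 + y) ^ m := by
  rw [sum_range_succ', ← sum_range_choose_mul_pow, mul_sum]
  refine (add_eq_left.mpr (by simp)).trans (sum_congr rfl fun s _ => ?_)
  have h := congrArg (Nat.cast : ℕ → R) (Nat.add_one_mul_choose_eq m s)
  push_cast at h ⊢
  linear_combination y ^ (s + 1) * h.symm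

theorem one_add_mul_sum_range_mul_choose_mul_pow (m : ℕ) (y : R) :
    (1 + y) * ∑ s ∈ range (m + 1), (s : R) * (m.choose s : R) * y ^ s
      = m * y * (1 + y) ^ m := by
  cases m with
  | zero => simp
  | succ m =>
    rw [sum_range_succ_mul_choose_mul_pow]
    push_cast
    ring

theorem sum_range_choose_mul_pow_mul_add (m : ℕ) (y a : R) :
    ∑ s ∈ range (m + 1), (m.choose s : R) * y ^ s * (a + (1 + y) * s)
      = (1 + y) ^ m * (a + m * y) := by
  calc ∑ s ∈ range (m + 1), (m.choose s : R) * y ^ s * (a + (1 + y) * s)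
      = (∑ s ∈ range (m + 1), (m.choose s : R) * y ^ s) * a
        + (1 + y) * ∑ s ∈ range (m + 1), (s : R) * (m.choose s : R) * y ^ s := by
        rw [sum_mul, mul_sum, ← sum_add_distrib]
        exact sum_congr rfl fun s _ => by ring
    _ = (1 + y) ^ m * (a + m * y) := by
        rw [sum_range_choose_mul_pow, one_add_mul_sum_range_mul_choose_mul_pow]
        ring

theorem sum_range_mul_zbinom (m : ℕ) (f : ℕ → R) :
    ∑ t ∈ range (m + 2), f t * (zbinom m t : R)
      = ∑ s ∈ range (m + 1), f s * (m.choose s : R) := by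
  simp [zbinom, sum_range_succ _ (m + 1)]

theorem sum_range_succ_mul_zbinom_sub_one (m N : ℕ) (f : ℕ → R) :
    ∑ t ∈ range (N + 1), f t * (zbinom m ((t : ℤ) - 1) : R)
      = ∑ s ∈ range N, f (s + 1) * (m.choose s : R) := by
  simp [zbinom, sum_range_succ']

end BinomialSums

theorem statement9 (n : ℕ) (hn : 1 ≤ n) (S : ℤ) (x : ℚ) :
    ∑ t ∈ Finset.range (n + 1),
      (-x) ^ t * (((zbinom (n - 1) (t : ℤ) : ℚ) - (zbinom (n - 1) ((t : ℤ) - 1) : ℚ))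
          * ((S : ℚ) + t)
        + 2 * ((t : ℚ) - 1) * (zbinom (n - 1) ((t : ℤ) - 1) : ℚ))
      = (1 - x) ^ (n - 1) * (((S : ℚ) + 2 - n) * (x + 1) + ((n : ℚ) - 2)) := by
  obtain ⟨m, rfl⟩ : ∃ m, n = m + 1 := ⟨n - 1, by omega⟩
  rw [Nat.add_sub_cancel]
  have hsplit : ∀ t : ℕ,
      (-x) ^ t * (((zbinom m t : ℚ) - (zbinom m ((t : ℤ) - 1) : ℚ)) * ((S : ℚ) + t)
        + 2 * ((t : ℚ) - 1) * (zbinom m ((t : ℤ) - 1) : ℚ))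
      = (-x) ^ t * ((S : ℚ) + t) * (zbinom m t : ℚ)
        + (-x) ^ t * ((t : ℚ) - 2 - S) * (zbinom m ((t : ℤ) - 1) : ℚ) :=
    fun t => by ring
  have hcombine : ∀ s : ℕ,
      (-x) ^ s * ((S : ℚ) + s) * (m.choose s : ℚ)
        + (-x) ^ (s + 1) * (((s + 1 : ℕ) : ℚ) - 2 - S) * (m.choose s : ℚ)
      = (m.choose s : ℚ) * (-x) ^ s * ((S * (1 + x) + x) + (1 + -x) * s) :=
    fun s => by push_cast; ring
  rw [sum_congr rfl fun t _ => hsplit t, sum_add_distrib, sum_range_mul_zbinom,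
    sum_range_succ_mul_zbinom_sub_one, ← sum_add_distrib, sum_congr rfl fun s _ => hcombine s,
    sum_range_choose_mul_pow_mul_add, ← sub_eq_add_neg]
  push_cast
  ring
end
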